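/- arXiv:2602.00205 — 4 statements merged into one kernel-verified Lean document; each statement's English description precedes it below -/
import Mathlib

section
/- Log-sum-exp dominates the ramp: for every real number γ > 0 and every real u, min(1, max(0, 1 − u/γ)) ≤ log₂(1 + exp(−u/γ)), where log₂ denotes the base-2 logarithm. -/
/-- **Log-sum-exp dominates the ramp.** For every real `γ > 0` and every real `u`,
`min(1, max(0, 1 − u/γ)) ≤ log₂(1 + exp(−u/γ))`. -/
theorem ramp_le_logb_two_one_add_exp (γ u : ℝ) (hγ : 0 < γ) :
    min 1 (max 0 (1 - u / γ)) ≤ Real.logb 2 (1 + Real.exp (-(u / γ))) := by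
  set t := u / γ with ht
  have hlog2 : (0:ℝ) < Real.log 2 := Real.log_pos one_lt_two
  have hln2 : (1:ℝ) < 2 * Real.log 2 := by
    nlinarith [Real.log_two_gt_d9]
  have hlog0 : 0 ≤ Real.logb 2 (1 + Real.exp (-t)) := by
    apply Real.logb_nonneg one_lt_two
    linarith [Real.exp_pos (-t)]
  have hamgm : 2 * Real.exp (-t / 2) ≤ 1 + Real.exp (-t) := by
    have h := sq_nonneg (Real.exp (-t / 2) - 1)
    have he : Real.exp (-t / 2) * Real.exp (-t / 2) = Real.exp (-t) := by
      rw [← Real.exp_add]; ring_nf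
    nlinarith
  have hkey : 1 - t / (2 * Real.log 2) ≤ Real.logb 2 (1 + Real.exp (-t)) := by
    have heq : Real.logb 2 (2 * Real.exp (-t / 2)) = 1 - t / (2 * Real.log 2) := by
      rw [Real.logb, Real.log_mul (by norm_num) (Real.exp_ne_zero _), Real.log_exp]
      field_simp
      ring
    rw [← heq]
    exact Real.logb_le_logb_of_le one_lt_two (by positivity) hamgm
  rcases le_or_gt t 0 with htn | htp
  · have h1 : (1:ℝ) ≤ 1 - t / (2 * Real.log 2) := by
      have : t / (2 * Real.log 2) ≤ 0 :=
        div_nonpos_of_nonpos_of_nonneg htn (by linarith)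
      linarith
    calc min 1 (max 0 (1 - t)) ≤ 1 := min_le_left _ _
      _ ≤ _ := le_trans h1 hkey
  · have h2 : 1 - t ≤ 1 - t / (2 * Real.log 2) := by
      have : t / (2 * Real.log 2) ≤ t := div_le_self htp.le hln2.le
      linarith
    calc min 1 (max 0 (1 - t)) ≤ max 0 (1 - t) := min_le_right _ _
      _ ≤ max 0 (1 - t / (2 * Real.log 2)) := max_le_max le_rfl h2
      _ ≤ _ := max_le hlog0 hkey
end

section
/- Pointwise surrogate bound: let K ≥ 2, let z ∈ ℝ^K be a logit vector, let y ∈ {1,...,K} and γ_y > 0. Then Φ_{γ_y}(z_y − max_{y'≠y} z_{y'}) ≤ (1/ln 2) · ln(1 + Σ_{y'≠y} exp((z_{y'} − z_y)/γ_y)). -/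
/-!
Put `t = (z_y − max_{y'≠y} z_{y'}) / γ_y`. The sum contains `exp (-t)`, the term of a class
attaining the maximum, so it suffices to show `ln 2 · min(1, max(0, 1 − t)) ≤ ln(1 + e^{−t})`.
The right side is positive and, by AM–GM `1 + e^{−t} ≥ 2 e^{−t/2}`, lies above its tangent
`ln 2 − t/2` at `0`; since `ln 2 > 1/2`, the piecewise linear left side lies below
`max(0, ln 2 − t/2)`.
-/

/-- The ramp function `Φ_γ(u) = min(1, max(0, 1 − u/γ))`. -/
noncomputable def ramp (γ u : ℝ) : ℝ := min 1 (max 0 (1 - u / γ))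

theorem eraseUnivNonempty {K : ℕ} (hK : 2 ≤ K) (y : Fin K) :
    (Finset.univ.erase y).Nonempty := by
  rw [← Finset.card_pos, Finset.card_erase_of_mem (Finset.mem_univ y),
    Finset.card_univ, Fintype.card_fin]
  omega

/-- `max_{y' ≠ y} z_{y'}`, the largest score among the classes other than `y`. -/
noncomputable def maxOther {K : ℕ} (hK : 2 ≤ K) (z : Fin K → ℝ) (y : Fin K) : ℝ :=
  (Finset.univ.erase y).sup' (eraseUnivNonempty hK y) z

open Real

lemma log_two_sub_half_le_log_one_add_exp_neg (t : ℝ) : log 2 - t / 2 ≤ log (1 + exp (-t)) := by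
  have hsq : exp (-t / 2) ^ 2 = exp (-t) := by rw [← exp_nat_mul]; ring_nf
  have hamgm : 2 * exp (-t / 2) ≤ 1 + exp (-t) := by nlinarith [sq_nonneg (1 - exp (-t / 2))]
  calc log 2 - t / 2 = log (2 * exp (-t / 2)) := by
        rw [log_mul two_ne_zero (exp_ne_zero _), log_exp]; ring
    _ ≤ log (1 + exp (-t)) := log_le_log (by positivity) hamgm

lemma log_two_mul_ramp_le_log_one_add_exp_neg (γ u : ℝ) :
    log 2 * ramp γ u ≤ log (1 + exp (-(u / γ))) := by
  set t := u / γ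
  have hhalf : 1 / 2 < log 2 := by linarith [log_two_gt_d9]
  have hpos : 0 < log (1 + exp (-t)) := log_pos (by linarith [exp_pos (-t)])
  calc log 2 * ramp γ u ≤ max 0 (log 2 - t / 2) := by
        unfold ramp
        rcases le_total t 0 with ht | ht
        · rw [min_eq_left (le_max_of_le_right (by linarith))]
          exact le_max_of_le_right (by linarith)
        rcases le_total t 1 with ht' | ht'
        · rw [max_eq_right (by linarith), min_eq_right (by linarith)]
          exact le_max_of_le_right (by nlinarith)
        · rw [max_eq_left (by linarith), min_eq_right zero_le_one, mul_zero]
          exact le_max_left _ _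
    _ ≤ log (1 + exp (-t)) := max_le hpos.le (log_two_sub_half_le_log_one_add_exp_neg t)

theorem margin_loss_le_inv_log_two_mul_ce_general (K : ℕ) (hK : 2 ≤ K) (z : Fin K → ℝ)
    (y : Fin K) (γy : ℝ) :
    ramp γy (z y - maxOther hK z y) ≤
      (1 / Real.log 2) *
        Real.log (1 + ∑ y' ∈ Finset.univ.erase y, Real.exp ((z y' - z y) / γy)) := by
  obtain ⟨y₀, hy₀, hmax⟩ := Finset.exists_mem_eq_sup' (eraseUnivNonempty hK y) z
  have hterm : exp (-((z y - maxOther hK z y) / γy)) ≤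
      ∑ y' ∈ Finset.univ.erase y, exp ((z y' - z y) / γy) := by
    rw [maxOther, hmax, ← neg_div, neg_sub]
    exact Finset.single_le_sum (f := fun y' ↦ exp ((z y' - z y) / γy))
      (fun _ _ ↦ (exp_pos _).le) hy₀
  rw [one_div_mul_eq_div, le_div_iff₀' (log_pos one_lt_two)]
  calc log 2 * ramp γy (z y - maxOther hK z y)
      ≤ log (1 + exp (-((z y - maxOther hK z y) / γy))) :=
        log_two_mul_ramp_le_log_one_add_exp_neg _ _
    _ ≤ _ := by gcongr

/-- **Pointwise surrogate bound.** For `K ≥ 2`, a logit vector `z ∈ ℝ^K`, a label `y` and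
`γ_y > 0`, the `γ`-margin (ramp) loss is bounded by `(1/ln 2)` times the `γ`-margin
cross-entropy loss:
`Φ_{γ_y}(z_y − max_{y'≠y} z_{y'}) ≤ (1/ln 2) · ln(1 + Σ_{y'≠y} exp((z_{y'} − z_y)/γ_y))`. -/
theorem margin_loss_le_inv_log_two_mul_ce (K : ℕ) (hK : 2 ≤ K) (z : Fin K → ℝ)
    (y : Fin K) (γy : ℝ) (hγ : 0 < γy) :
    ramp γy (z y - maxOther hK z y) ≤
      (1 / Real.log 2) *
        Real.log (1 + ∑ y' ∈ Finset.univ.erase y, Real.exp ((z y' - z y) / γy)) :=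
  margin_loss_le_inv_log_two_mul_ce_general K hK z y γy
end

section
/- Bound on the empirical γ-margin Rademacher complexity (L2 case): fix K ≥ 2, Λ > 0, a feature map φ : X → ℝ^d, and margins γ = (γ_1,...,γ_K) with every γ_k > 0. Let F = {(x,y) ↦ ⟨w_y, φ(x)⟩ : w_1,...,w_K ∈ ℝ^d, ‖w_y‖₂ ≤ Λ for all y}. Let D = ((x_i,y_i))_{i=1}^N be a class-balanced dataset, i.e., |I_k| = N/K for every class k, where I_k = {i : y_i = k}. For each k let μ̂_k = (K/N) Σ_{i∈I_k} φ(x_i) and ‖ŝ_k‖₂² = (K/N) Σ_{i∈I_k} ‖φ(x_i) − μ̂_k‖₂². Then R̂_D^γ(F) ≤ Λ √(K/N) · √(Σ_{k=1}^K (‖μ̂_k‖₂² + ‖ŝ_k‖₂²)/γ_k²). -/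
open MeasureTheory
open scoped RealInnerProductSpace

/-- The empirical `γ`-margin Rademacher complexity
`R̂_D^γ(F) = (1/N) · E_ε[sup_{f∈F} Σ_i Σ_y ε_{iy} f(x_i, y)/γ_{y_i}]`, where the
expectation over the i.i.d. Rademacher variables `ε_{iy}` uniform on `{−1,+1}` is
written as the average over all `2^{N·K}` sign patterns. -/
noncomputable def radComp {X : Type*} {K N : ℕ} (F : Set (X → Fin K → ℝ))
    (γ : Fin K → ℝ) (D : Fin N → X × Fin K) : ℝ :=
  (1 / (N : ℝ)) *
    ((∑ σ : Fin N → Fin K → Bool,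
        sSup ((fun f => ∑ i, ∑ y,
          (if σ i y then (1 : ℝ) else -1) * f (D i).1 y / γ ((D i).2)) '' F)) /
      2 ^ (N * K))

/-- The linear hypothesis class
`F = {(x,y) ↦ ⟨w_y, φ(x)⟩ : w_y ∈ ℝ^d, ‖w_y‖₂ ≤ Λ for all y}`. -/
def linClass {X : Type*} (K d : ℕ) (φ : X → EuclideanSpace ℝ (Fin d)) (Λ : ℝ) :
    Set (X → Fin K → ℝ) :=
  {g | ∃ w : Fin K → EuclideanSpace ℝ (Fin d),
    (∀ y, ‖w y‖ ≤ Λ) ∧ ∀ x y, g x y = ⟪w y, φ x⟫}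

/-- Empirical per-class feature mean `μ̂_k = (K/N) Σ_{i∈I_k} v_i` (for a class-balanced
dataset, `|I_k| = N/K`). -/
noncomputable def classMean {K N d : ℕ} (v : Fin N → EuclideanSpace ℝ (Fin d))
    (ylab : Fin N → Fin K) (k : Fin K) : EuclideanSpace ℝ (Fin d) :=
  ((K : ℝ) / N) • ∑ i ∈ Finset.univ.filter (fun i => ylab i = k), v i

/-- Empirical per-class mean squared deviation
`‖ŝ_k‖₂² = (K/N) Σ_{i∈I_k} ‖v_i − μ̂_k‖₂²`. -/
noncomputable def classMSD {K N d : ℕ} (v : Fin N → EuclideanSpace ℝ (Fin d))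
    (ylab : Fin N → Fin K) (k : Fin K) : ℝ :=
  ((K : ℝ) / N) * ∑ i ∈ Finset.univ.filter (fun i => ylab i = k),
    ‖v i - classMean v ylab k‖ ^ 2

/-- For `i ≠ j`, the product of the Rademacher signs at `(i,y)` and `(j,y)` averages
to zero over all sign patterns. -/
lemma sign_sum_zero {K N : ℕ} {i j : Fin N} (hij : i ≠ j) (y : Fin K) :
    ∑ σ : Fin N → Fin K → Bool,
      ((if σ i y then (1:ℝ) else -1) * (if σ j y then (1:ℝ) else -1)) = 0 := by
  apply Finset.sum_ninvolution
    (fun σ : Fin N → Fin K → Bool => Function.update σ i (Function.update (σ i) y (!(σ i y))))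
  · intro σ
    simp only [Function.update_self, Function.update_of_ne hij.symm]
    cases h1 : σ i y <;> cases h2 : σ j y <;> simp [h1, h2]
  · intro σ _ h
    have := congrFun (congrFun h i) y
    simp at this
  · intro σ; exact Finset.mem_univ _
  · intro σ
    funext a b
    rcases eq_or_ne a i with rfl | ha
    · simp only [Function.update_self]
      rcases eq_or_ne b y with rfl | hb
      · simp
      · simp [Function.update_of_ne hb]
    · simp [Function.update_of_ne ha]

/-- Second moment identity for Rademacher averages:
`Σ_σ ‖Σ_i ε_{iy} a_i‖² = 2^{NK} Σ_i ‖a_i‖²`. -/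
lemma second_moment {K N d : ℕ} (a : Fin N → EuclideanSpace ℝ (Fin d)) (y : Fin K) :
    ∑ σ : Fin N → Fin K → Bool,
      ‖∑ i, (if σ i y then (1:ℝ) else -1) • a i‖ ^ 2
      = 2 ^ (N * K) * ∑ i, ‖a i‖ ^ 2 := by
  have card_eq : (Finset.univ : Finset (Fin N → Fin K → Bool)).card = 2 ^ (N * K) := by
    simp [Finset.card_univ]; rw [← pow_mul, Nat.mul_comm]
  have expand : ∀ σ : Fin N → Fin K → Bool,
      ‖∑ i, (if σ i y then (1:ℝ) else -1) • a i‖ ^ 2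
      = ∑ i, ∑ j, ((if σ i y then (1:ℝ) else -1) * (if σ j y then (1:ℝ) else -1))
          * ⟪a i, a j⟫ := by
    intro σ
    rw [← real_inner_self_eq_norm_sq, sum_inner]
    refine Finset.sum_congr rfl fun i _ => ?_
    rw [inner_sum]
    refine Finset.sum_congr rfl fun j _ => ?_
    rw [real_inner_smul_left, real_inner_smul_right]
    ring
  simp_rw [expand]
  rw [Finset.sum_comm]
  have : ∀ i : Fin N,
      (∑ σ : Fin N → Fin K → Bool, ∑ j,
        ((if σ i y then (1:ℝ) else -1) * (if σ j y then (1:ℝ) else -1)) * ⟪a i, a j⟫)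
      = 2 ^ (N * K) * ‖a i‖ ^ 2 := by
    intro i
    rw [Finset.sum_comm]
    rw [Finset.sum_eq_single i]
    · have : ∀ σ : Fin N → Fin K → Bool,
        ((if σ i y then (1:ℝ) else -1) * (if σ i y then (1:ℝ) else -1)) * ⟪a i, a i⟫
          = ⟪a i, a i⟫ := by
        intro σ; cases h : σ i y <;> simp [h]
      simp_rw [this]
      rw [Finset.sum_const, card_eq, nsmul_eq_mul, real_inner_self_eq_norm_sq]
      push_cast; ring
    · intro j _ hji
      rw [← Finset.sum_mul, sign_sum_zero (Ne.symm hji) y, zero_mul]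
    · simp
  simp_rw [this]
  rw [← Finset.mul_sum]

/-- The supremum over the linear class is bounded by `Λ Σ_y ‖Σ_i ε_{iy}/γ_{y_i} φ(x_i)‖`. -/
lemma sup_bound {X : Type*} {K N d : ℕ} {Λ : ℝ} (hΛ : 0 ≤ Λ)
    (φ : X → EuclideanSpace ℝ (Fin d)) (γ : Fin K → ℝ)
    (D : Fin N → X × Fin K) (σ : Fin N → Fin K → Bool) :
    sSup ((fun f => ∑ i, ∑ y,
        (if σ i y then (1 : ℝ) else -1) * f (D i).1 y / γ ((D i).2)) '' linClass K d φ Λ)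
      ≤ Λ * ∑ y : Fin K,
          ‖∑ i, ((if σ i y then (1:ℝ) else -1) / γ ((D i).2)) • φ (D i).1‖ := by
  apply csSup_le
  · exact ⟨_, ⟨fun x y => ⟪(0 : EuclideanSpace ℝ (Fin d)), φ x⟫,
      ⟨fun _ => 0, fun _ => by simpa using hΛ, fun _ _ => rfl⟩, rfl⟩⟩
  · rintro b ⟨g, ⟨w, hw, hg⟩, rfl⟩
    simp only [hg]
    rw [Finset.sum_comm]
    calc ∑ y : Fin K, ∑ i, (if σ i y then (1:ℝ) else -1) * ⟪w y, φ (D i).1⟫ / γ ((D i).2)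
        = ∑ y : Fin K, ⟪w y, ∑ i, ((if σ i y then (1:ℝ) else -1) / γ ((D i).2)) • φ (D i).1⟫ := by
          refine Finset.sum_congr rfl fun y _ => ?_
          rw [inner_sum]
          refine Finset.sum_congr rfl fun i _ => ?_
          rw [real_inner_smul_right]; ring
      _ ≤ ∑ y : Fin K, Λ * ‖∑ i, ((if σ i y then (1:ℝ) else -1) / γ ((D i).2)) • φ (D i).1‖ := by
          refine Finset.sum_le_sum fun y _ => ?_
          calc ⟪w y, _⟫ ≤ ‖w y‖ * ‖∑ i, ((if σ i y then (1:ℝ) else -1) / γ ((D i).2)) • φ (D i).1‖ :=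
                real_inner_le_norm _ _
            _ ≤ Λ * _ := by
                apply mul_le_mul_of_nonneg_right (hw y) (norm_nonneg _)
      _ = Λ * ∑ y : Fin K, ‖∑ i, ((if σ i y then (1:ℝ) else -1) / γ ((D i).2)) • φ (D i).1‖ := by
          rw [Finset.mul_sum]

/-- Bias–variance identity: `‖μ̂_k‖² + ‖ŝ_k‖² = (K/N) Σ_{i∈I_k} ‖v_i‖²`. -/
lemma class_identity {K N d : ℕ} (hN : 0 < N) (hK : 0 < K)
    (v : Fin N → EuclideanSpace ℝ (Fin d)) (c : Fin N → Fin K) (k : Fin K)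
    (hbal : (Finset.univ.filter (fun i => c i = k)).card * K = N) :
    ‖classMean v c k‖ ^ 2 + classMSD v c k
      = ((K:ℝ)/N) * ∑ i ∈ Finset.univ.filter (fun i => c i = k), ‖v i‖ ^ 2 := by
  set I := Finset.univ.filter (fun i => c i = k) with hI
  set S := ∑ i ∈ I, v i with hS
  have hcard : (I.card : ℝ) * K = N := by exact_mod_cast hbal
  have hKR : (0:ℝ) < K := by exact_mod_cast hK
  have hNR : (0:ℝ) < N := by exact_mod_cast hN
  have hμ : classMean v c k = ((K:ℝ)/N) • S := rfl
  have h1 : ‖classMean v c k‖ ^ 2 = ((K:ℝ)/N) ^ 2 * ‖S‖ ^ 2 := by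
    rw [hμ, norm_smul, Real.norm_eq_abs, abs_of_nonneg (by positivity), mul_pow]
  have h2 : ∑ i ∈ I, ⟪v i, classMean v c k⟫ = ((K:ℝ)/N) * ‖S‖ ^ 2 := by
    rw [← sum_inner, hμ, real_inner_smul_right, real_inner_self_eq_norm_sq]
  have h3 : ∑ i ∈ I, ‖v i - classMean v c k‖ ^ 2
      = ∑ i ∈ I, ‖v i‖ ^ 2 - 2 * (((K:ℝ)/N) * ‖S‖ ^ 2)
        + I.card * (((K:ℝ)/N) ^ 2 * ‖S‖ ^ 2) := by
    have : ∀ i ∈ I, ‖v i - classMean v c k‖ ^ 2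
        = ‖v i‖ ^ 2 - 2 * ⟪v i, classMean v c k⟫ + ‖classMean v c k‖ ^ 2 := by
      intro i _; rw [norm_sub_sq_real]
    rw [Finset.sum_congr rfl this, Finset.sum_add_distrib, Finset.sum_sub_distrib,
      ← Finset.mul_sum, h2, Finset.sum_const, nsmul_eq_mul, h1]
  rw [classMSD, ← hI, h3, h1]
  have hc1 : ((K:ℝ)/N) * I.card = 1 := by
    rw [div_mul_eq_mul_div, div_eq_one_iff_eq (ne_of_gt hNR), mul_comm]
    exact hcard
  linear_combination ((K:ℝ)/N)^2 * ‖S‖^2 * hc1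

/-- **Bound on the empirical `γ`-margin Rademacher complexity (L² case).** For a
class-balanced dataset,
`R̂_D^γ(F) ≤ Λ √(K/N) · √(Σ_k (‖μ̂_k‖₂² + ‖ŝ_k‖₂²)/γ_k²)`. -/
theorem radComp_le_l2_bound {X : Type*} (K N d : ℕ) (hK : 2 ≤ K) (hN : 0 < N)
    (Λ : ℝ) (hΛ : 0 < Λ) (φ : X → EuclideanSpace ℝ (Fin d))
    (γ : Fin K → ℝ) (hγ : ∀ k, 0 < γ k)
    (D : Fin N → X × Fin K)
    (hbal : ∀ k : Fin K, (Finset.univ.filter (fun i => (D i).2 = k)).card * K = N) :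
    radComp (linClass K d φ Λ) γ D ≤
      Λ * Real.sqrt ((K : ℝ) / N) *
        Real.sqrt (∑ k,
          (‖classMean (fun i => φ (D i).1) (fun i => (D i).2) k‖ ^ 2 +
              classMSD (fun i => φ (D i).1) (fun i => (D i).2) k) / γ k ^ 2) := by
  classical
  have hK0 : 0 < K := lt_of_lt_of_le two_pos hK
  have hNR : (0:ℝ) < N := by exact_mod_cast hN
  have hKR : (0:ℝ) < K := by exact_mod_cast hK0
  set S : ℝ := ∑ i, ‖φ (D i).1‖ ^ 2 / γ ((D i).2) ^ 2 with hSdef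
  have hS0 : 0 ≤ S := by positivity
  set M : ℝ := 2 ^ (N * K) with hMdef
  have hM0 : (0:ℝ) < M := by positivity
  set a : Fin N → EuclideanSpace ℝ (Fin d) := fun i => (γ ((D i).2))⁻¹ • φ (D i).1 with ha
  have hanorm : ∑ i, ‖a i‖ ^ 2 = S := by
    refine Finset.sum_congr rfl fun i _ => ?_
    rw [ha]
    simp only
    rw [norm_smul, Real.norm_eq_abs, abs_of_nonneg (inv_nonneg.2 (hγ _).le), mul_pow,
      inv_pow, inv_mul_eq_div]
  have hu : ∀ (σ : Fin N → Fin K → Bool) (y : Fin K),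
      ∑ i, ((if σ i y then (1:ℝ) else -1) / γ ((D i).2)) • φ (D i).1
        = ∑ i, (if σ i y then (1:ℝ) else -1) • a i := by
    intro σ y
    refine Finset.sum_congr rfl fun i _ => ?_
    rw [ha, div_eq_mul_inv, mul_smul]
  -- per-class Cauchy–Schwarz over sign patterns
  have hy : ∀ y : Fin K,
      ∑ σ : Fin N → Fin K → Bool,
        ‖∑ i, ((if σ i y then (1:ℝ) else -1) / γ ((D i).2)) • φ (D i).1‖
      ≤ M * Real.sqrt S := by
    intro y
    have card_eq : ((Finset.univ : Finset (Fin N → Fin K → Bool)).card : ℝ) = M := by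
      have h : (Finset.univ : Finset (Fin N → Fin K → Bool)).card = 2 ^ (N * K) := by
        simp [Finset.card_univ]; rw [← pow_mul, Nat.mul_comm]
      rw [h, hMdef]; push_cast; ring
    have hsq : ∑ σ : Fin N → Fin K → Bool,
        ‖∑ i, ((if σ i y then (1:ℝ) else -1) / γ ((D i).2)) • φ (D i).1‖ ^ 2 = M * S := by
      simp_rw [hu]
      rw [second_moment a y, hanorm, hMdef]
    have hnn : 0 ≤ ∑ σ : Fin N → Fin K → Bool,
        ‖∑ i, ((if σ i y then (1:ℝ) else -1) / γ ((D i).2)) • φ (D i).1‖ :=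
      Finset.sum_nonneg fun _ _ => norm_nonneg _
    have hCS := sq_sum_le_card_mul_sum_sq
      (s := (Finset.univ : Finset (Fin N → Fin K → Bool)))
      (f := fun σ => ‖∑ i, ((if σ i y then (1:ℝ) else -1) / γ ((D i).2)) • φ (D i).1‖)
    rw [hsq] at hCS
    have hMS : M * Real.sqrt S = Real.sqrt (M * (M * S)) := by
      rw [show M * (M * S) = M ^ 2 * S by ring, Real.sqrt_mul (sq_nonneg M),
        Real.sqrt_sq hM0.le]
    rw [hMS]
    rw [Real.le_sqrt hnn (by positivity)]
    calc (∑ σ : Fin N → Fin K → Bool,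
          ‖∑ i, ((if σ i y then (1:ℝ) else -1) / γ ((D i).2)) • φ (D i).1‖) ^ 2
        ≤ ((Finset.univ : Finset (Fin N → Fin K → Bool)).card : ℝ) * (M * S) := hCS
      _ = M * (M * S) := by rw [card_eq]
  -- main chain
  have key : radComp (linClass K d φ Λ) γ D ≤ Λ * ((K:ℝ)/N) * Real.sqrt S := by
    rw [radComp]
    have step1 : (∑ σ : Fin N → Fin K → Bool,
        sSup ((fun f => ∑ i, ∑ y,
          (if σ i y then (1 : ℝ) else -1) * f (D i).1 y / γ ((D i).2)) '' linClass K d φ Λ))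
        ≤ Λ * (K * (M * Real.sqrt S)) := by
      calc (∑ σ : Fin N → Fin K → Bool, sSup _)
          ≤ ∑ σ : Fin N → Fin K → Bool, Λ * ∑ y : Fin K,
              ‖∑ i, ((if σ i y then (1:ℝ) else -1) / γ ((D i).2)) • φ (D i).1‖ :=
            Finset.sum_le_sum fun σ _ => sup_bound hΛ.le φ γ D σ
        _ = Λ * ∑ y : Fin K, ∑ σ : Fin N → Fin K → Bool,
              ‖∑ i, ((if σ i y then (1:ℝ) else -1) / γ ((D i).2)) • φ (D i).1‖ := by
            rw [← Finset.mul_sum, Finset.sum_comm]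
        _ ≤ Λ * ∑ _y : Fin K, M * Real.sqrt S := by
            apply mul_le_mul_of_nonneg_left _ hΛ.le
            exact Finset.sum_le_sum fun y _ => hy y
        _ = Λ * (K * (M * Real.sqrt S)) := by
            rw [Finset.sum_const, Finset.card_univ, Fintype.card_fin, nsmul_eq_mul]
    calc (1 / (N : ℝ)) * ((∑ σ : Fin N → Fin K → Bool, sSup _) / 2 ^ (N * K))
        ≤ (1 / (N : ℝ)) * ((Λ * (K * (M * Real.sqrt S))) / 2 ^ (N * K)) := by
          apply mul_le_mul_of_nonneg_left _ (by positivity)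
          apply div_le_div_of_nonneg_right step1 (by positivity)
      _ = Λ * ((K:ℝ)/N) * Real.sqrt S := by
          rw [← hMdef]
          field_simp
  -- identify the right-hand side
  have hT : (∑ k,
      (‖classMean (fun i => φ (D i).1) (fun i => (D i).2) k‖ ^ 2 +
          classMSD (fun i => φ (D i).1) (fun i => (D i).2) k) / γ k ^ 2)
      = ((K:ℝ)/N) * S := by
    have h1 : ∀ k : Fin K,
        (‖classMean (fun i => φ (D i).1) (fun i => (D i).2) k‖ ^ 2 +
            classMSD (fun i => φ (D i).1) (fun i => (D i).2) k) / γ k ^ 2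
        = ((K:ℝ)/N) * ∑ i ∈ Finset.univ.filter (fun i => (D i).2 = k),
            ‖φ (D i).1‖ ^ 2 / γ ((D i).2) ^ 2 := by
      intro k
      have hfil : ∑ i ∈ Finset.univ.filter (fun i => (D i).2 = k),
            ‖φ (D i).1‖ ^ 2 / γ ((D i).2) ^ 2
          = ∑ i ∈ Finset.univ.filter (fun i => (D i).2 = k), ‖φ (D i).1‖ ^ 2 / γ k ^ 2 :=
        Finset.sum_congr rfl fun i hi => by rw [(Finset.mem_filter.mp hi).2]
      rw [class_identity hN hK0 _ _ k (hbal k), hfil, mul_div_assoc, Finset.sum_div]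
    rw [Finset.sum_congr rfl fun k _ => h1 k, ← Finset.mul_sum]
    congr 1
    rw [hSdef]
    exact Finset.sum_fiberwise_of_maps_to (fun i _ => Finset.mem_univ _) _
  rw [hT]
  have : Real.sqrt ((K:ℝ)/N) * Real.sqrt (((K:ℝ)/N) * S)
      = ((K:ℝ)/N) * Real.sqrt S := by
    rw [Real.sqrt_mul (by positivity), ← mul_assoc,
      Real.mul_self_sqrt (by positivity)]
  calc radComp (linClass K d φ Λ) γ D ≤ Λ * ((K:ℝ)/N) * Real.sqrt S := key
    _ = Λ * Real.sqrt ((K:ℝ)/N) * Real.sqrt (((K:ℝ)/N) * S) := by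
        rw [mul_assoc, mul_assoc, this]
end

section
/- Optimal choice of per-class margins: let K ≥ 1, let α_1,...,α_K > 0, and let c̄ > 0. Define γ*_y = c̄·K·α_y^{1/3} / (Σ_{k=1}^K α_k^{1/3}) for each y ∈ {1,...,K}. Then γ* satisfies the constraint Σ_{k=1}^K γ*_k = c̄·K, and for every γ = (γ_1,...,γ_K) with all γ_k > 0 and Σ_{k=1}^K γ_k = c̄·K, one has Σ_{k=1}^K α_k/γ_k² ≥ Σ_{k=1}^K α_k/(γ*_k)² = (Σ_{k=1}^K α_k^{1/3})³/(c̄·K)². -/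
/-- The optimal per-class margins
`γ*_y = c̄·K·α_y^{1/3} / (Σ_k α_k^{1/3})`. -/
noncomputable def gammaStar {K : ℕ} (c : ℝ) (α : Fin K → ℝ) (y : Fin K) : ℝ :=
  c * K * α y ^ ((1 : ℝ) / 3) / ∑ k, α k ^ ((1 : ℝ) / 3)

/-!
Write `a_k = α_k^{1/3}`, `S = Σ a_k` and `B = c̄·K`, so that `γ*_k = a_k B / S`. Convexity of
`γ ↦ a³/γ²` gives its tangent bound at `γ = a / λ`, namely `a³/γ² ≥ 3λ²a - 2λ³γ`, which is
`(a - λγ)²(a + 2λγ) ≥ 0`. Summing with `λ = S / B` (the Lagrange multiplier) over any `γ` with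
`Σ γ_k = B` gives `Σ a_k³/γ_k² ≥ 3λ²S - 2λ³B = S³/B²`, and `γ*` attains this value.
-/

open Finset

theorem tangent_le_cube_div_sq {a γ l : ℝ} (ha : 0 ≤ a) (hγ : 0 < γ) (hl : 0 ≤ l) :
    3 * l ^ 2 * a - 2 * l ^ 3 * γ ≤ a ^ 3 / γ ^ 2 := by
  rw [le_div_iff₀ (by positivity)]
  have : 0 ≤ (a - l * γ) ^ 2 * (a + 2 * l * γ) := by positivity
  nlinarith

theorem Finset.cube_sum_div_sq_le_sum_cube_div_sq {ι : Type*} (s : Finset ι) {f g : ι → ℝ}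
    (hf : ∀ i ∈ s, 0 ≤ f i) (hg : ∀ i ∈ s, 0 < g i) :
    (∑ i ∈ s, f i) ^ 3 / (∑ i ∈ s, g i) ^ 2 ≤ ∑ i ∈ s, f i ^ 3 / g i ^ 2 := by
  have hrhs : 0 ≤ ∑ i ∈ s, f i ^ 3 / g i ^ 2 :=
    sum_nonneg fun i hi => div_nonneg (pow_nonneg (hf i hi) 3) (sq_nonneg _)
  rcases (sum_nonneg fun i hi => (hg i hi).le : 0 ≤ ∑ i ∈ s, g i).eq_or_lt with hB | hB
  · rwa [← hB, zero_pow two_ne_zero, div_zero]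
  have hl : 0 ≤ (∑ i ∈ s, f i) / ∑ i ∈ s, g i := div_nonneg (sum_nonneg hf) hB.le
  calc (∑ i ∈ s, f i) ^ 3 / (∑ i ∈ s, g i) ^ 2
      = ∑ i ∈ s, (3 * ((∑ j ∈ s, f j) / ∑ j ∈ s, g j) ^ 2 * f i
          - 2 * ((∑ j ∈ s, f j) / ∑ j ∈ s, g j) ^ 3 * g i) := by
        rw [sum_sub_distrib, ← mul_sum, ← mul_sum]
        field_simp
        ring
    _ ≤ ∑ i ∈ s, f i ^ 3 / g i ^ 2 :=
        sum_le_sum fun i hi => tangent_le_cube_div_sq (hf i hi) (hg i hi) hl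

theorem Real.rpow_one_div_three_pow_three {x : ℝ} (hx : 0 ≤ x) : (x ^ ((1 : ℝ) / 3)) ^ 3 = x := by
  simpa using Real.rpow_inv_natCast_pow hx three_ne_zero

section gammaStar

variable {K : ℕ} (c : ℝ) {α : Fin K → ℝ}

theorem sum_gammaStar (hα : ∀ k, 0 < α k) : ∑ k, gammaStar c α k = c * K := by
  rcases K.eq_zero_or_pos with rfl | hK
  · simp
  have : Nonempty (Fin K) := Fin.pos_iff_nonempty.mp hK
  have hS : 0 < ∑ k, α k ^ ((1 : ℝ) / 3) :=
    sum_pos (fun k _ => Real.rpow_pos_of_pos (hα k) _) univ_nonempty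
  simp only [gammaStar]
  rw [← sum_div, ← mul_sum, mul_div_assoc, div_self hS.ne', mul_one]

theorem div_gammaStar_sq (hα : ∀ k, 0 < α k) (k : Fin K) :
    α k / gammaStar c α k ^ 2 =
      α k ^ ((1 : ℝ) / 3) * (∑ j, α j ^ ((1 : ℝ) / 3)) ^ 2 / (c * K) ^ 2 := by
  have ha : 0 < α k ^ ((1 : ℝ) / 3) := Real.rpow_pos_of_pos (hα k) _
  nth_rw 1 [gammaStar, ← Real.rpow_one_div_three_pow_three (hα k).le]
  field_simp

theorem sum_div_gammaStar_sq (hα : ∀ k, 0 < α k) :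
    ∑ k, α k / gammaStar c α k ^ 2 = (∑ k, α k ^ ((1 : ℝ) / 3)) ^ 3 / (c * K) ^ 2 := by
  simp only [div_gammaStar_sq c hα]
  rw [← sum_div, ← sum_mul]
  ring

end gammaStar

theorem gammaStar_optimal_general (K : ℕ) (α : Fin K → ℝ) (hα : ∀ k, 0 < α k)
    (c : ℝ) :
    (∑ k, gammaStar c α k = c * K) ∧
      (∀ γ : Fin K → ℝ, (∀ k, 0 < γ k) → (∑ k, γ k = c * K) →
        ∑ k, α k / gammaStar c α k ^ 2 ≤ ∑ k, α k / γ k ^ 2) ∧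
      ∑ k, α k / gammaStar c α k ^ 2 =
        (∑ k, α k ^ ((1 : ℝ) / 3)) ^ 3 / (c * K) ^ 2 := by
  refine ⟨sum_gammaStar c hα, fun γ hγ hsum => ?_, sum_div_gammaStar_sq c hα⟩
  have hradon := cube_sum_div_sq_le_sum_cube_div_sq univ
    (fun k _ => (Real.rpow_pos_of_pos (hα k) ((1 : ℝ) / 3)).le) (fun k _ => hγ k)
  simp only [Real.rpow_one_div_three_pow_three (hα _).le] at hradon
  rwa [sum_div_gammaStar_sq c hα, ← hsum]

/-- **Optimal choice of per-class margins.** For `K ≥ 1`, positive `α_1,…,α_K` and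
`c̄ > 0`, the margins `γ*_y = c̄·K·α_y^{1/3}/(Σ_k α_k^{1/3})` satisfy the budget
constraint `Σ_k γ*_k = c̄·K`, minimize the complexity term `Σ_k α_k/γ_k²` among all
positive margins with the same budget, and achieve the value
`(Σ_k α_k^{1/3})³/(c̄·K)²`. -/
theorem gammaStar_optimal (K : ℕ) (hK : 1 ≤ K) (α : Fin K → ℝ) (hα : ∀ k, 0 < α k)
    (c : ℝ) (hc : 0 < c) :
    (∑ k, gammaStar c α k = c * K) ∧
      (∀ γ : Fin K → ℝ, (∀ k, 0 < γ k) → (∑ k, γ k = c * K) →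
        ∑ k, α k / gammaStar c α k ^ 2 ≤ ∑ k, α k / γ k ^ 2) ∧
      ∑ k, α k / gammaStar c α k ^ 2 =
        (∑ k, α k ^ ((1 : ℝ) / 3)) ^ 3 / (c * K) ^ 2 :=
  gammaStar_optimal_general K α hα c
end
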